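/- Let 𝒜 be an abelian category, 𝒞 a full additive subcategory, C• a bounded-above complex with all terms in 𝒞, and f : X• → C• a 𝒞-quasi-isomorphism of complexes. Then there exists a cochain map g : C• → X• such that f∘g is homotopic to the identity of C•. -/

import Mathlib

open CategoryTheory Limits

universe v u

variable {A : Type u} [Category.{v} A] [Abelian A]

/-- A complex `X` is `𝒞`-acyclic if `Hom_𝒜(C, X)` is an acyclic complex of abelian
groups for every `C ∈ 𝒞`. -/
def CAcyclic (𝒞 : Set A) (X : CochainComplex A ℤ) : Prop :=
  ∀ C ∈ 𝒞, ∀ i : ℤ,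
    (((preadditiveCoyoneda.obj (Opposite.op C)).mapHomologicalComplex
      (ComplexShape.up ℤ)).obj X).ExactAt i

/-- A chain map `f` is a `𝒞`-quasi-isomorphism if `Hom_𝒜(C, f)` is a quasi-isomorphism
for every `C ∈ 𝒞`. -/
def CQuasiIso (𝒞 : Set A) {X Y : CochainComplex A ℤ} (f : X ⟶ Y) : Prop :=
  ∀ C ∈ 𝒞, QuasiIso (((preadditiveCoyoneda.obj (Opposite.op C)).mapHomologicalComplex
      (ComplexShape.up ℤ)).map f)

/-- A cochain complex is bounded above. -/
def BoundedAbove (X : CochainComplex A ℤ) : Prop :=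
  ∃ n : ℤ, ∀ i : ℤ, n < i → IsZero (X.X i)

/-!
The mapping cone of `f` is `𝒞`-acyclic, because `Hom_𝒜(C, -)` commutes with mapping cones and
a quasi-isomorphism has an acyclic cone. A cochain map `φ` from a bounded-above complex `K` with
terms in `𝒞` to a `𝒞`-acyclic complex `Z` is null-homotopic: a homotopy `α` with `δ α = φ` is
built downwards from the top degree of `K`, the correction in degree `n` being a lift through
the exactness of `Hom_𝒜(K^n, Z)`; each step changes `α` in a single degree only, so the
construction converges degreewise. Applied to `inr f : C• ⟶ cone f`, the distinguished triangle
`X• ⟶ C• ⟶ cone f ⟶ X•[1]` then shows that `𝟙` factors through `f` in the homotopy category.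
-/

open CochainComplex HomComplex

namespace CochainComplex

section NullHomotopy

variable {C : Type*} [Category C] [Preadditive C] {K L : CochainComplex C ℤ}

def IsNullHomotopyFrom (φ : K ⟶ L) (α : Cochain K L (-1)) (n : ℤ) : Prop :=
  ∀ p, n ≤ p → (δ (-1) 0 α).v p p (add_zero p) = φ.f p

variable {φ : K ⟶ L}

lemma IsNullHomotopyFrom.mono {α : Cochain K L (-1)} {n m : ℤ} (h : IsNullHomotopyFrom φ α n)
    (hnm : n ≤ m) : IsNullHomotopyFrom φ α m :=
  fun p hp => h p (hnm.trans hp)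

lemma isNullHomotopyFrom_zero_of_isZero {N : ℤ} (hK : ∀ p, N < p → IsZero (K.X p)) :
    IsNullHomotopyFrom φ 0 (N + 1) :=
  fun p hp => (hK p (by lia)).eq_of_src _ _

lemma HomComplex.Cochain.add_single_v_of_ne (α : Cochain K L (-1)) {n : ℤ}
    (β : K.X n ⟶ L.X (n - 1)) {p q : ℤ} (hpq : p + -1 = q) (hp : p ≠ n) :
    (α + Cochain.single β (-1)).v p q hpq = α.v p q hpq := by
  rw [Cochain.add_v, Cochain.single_v_eq_zero _ _ _ _ _ hp, add_zero]

variable {N : ℤ} (hK : ∀ p, N < p → IsZero (K.X p))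
  (extend : ∀ (n : ℤ) (α : Cochain K L (-1)), IsNullHomotopyFrom φ α (n + 1) →
    ∃ β : K.X n ⟶ L.X (n - 1), IsNullHomotopyFrom φ (α + Cochain.single β (-1)) n)

noncomputable def descendingNullHomotopy :
    (k : ℕ) → {α : Cochain K L (-1) // IsNullHomotopyFrom φ α (N + 1 - k)}
  | 0 => ⟨0, by simpa using isNullHomotopyFrom_zero_of_isZero hK⟩
  | k + 1 =>
    have h := extend (N - k) _ ((descendingNullHomotopy k).2.mono (by lia))
    ⟨_, h.choose_spec.mono (by lia)⟩

lemma descendingNullHomotopy_v_eq {k₁ k₂ : ℕ} {p q : ℤ} (hpq : p + -1 = q)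
    (hp₁ : N + 1 - k₁ ≤ p) (hp₂ : N + 1 - k₂ ≤ p) :
    (descendingNullHomotopy hK extend k₁).1.v p q hpq =
      (descendingNullHomotopy hK extend k₂).1.v p q hpq := by
  wlog hk : k₁ ≤ k₂ generalizing k₁ k₂
  · exact (this hp₂ hp₁ (by lia)).symm
  induction k₂, hk using Nat.le_induction with
  | base => rfl
  | succ k₂ hk ih => exact (ih (by lia)).trans (Cochain.add_single_v_of_ne _ _ _ (by lia)).symm

noncomputable def limitNullHomotopy : Cochain K L (-1) :=
  Cochain.mk fun p q hpq => (descendingNullHomotopy hK extend (N + 1 - p).toNat).1.v p q hpq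

lemma limitNullHomotopy_v (k : ℕ) {p q : ℤ} (hpq : p + -1 = q) (hp : N + 1 - k ≤ p) :
    (limitNullHomotopy hK extend).v p q hpq = (descendingNullHomotopy hK extend k).1.v p q hpq :=
  descendingNullHomotopy_v_eq hK extend hpq (by lia) hp

end NullHomotopy

lemma nonempty_homotopy_zero_of_extend {C : Type*} [Category C] [Preadditive C]
    {K L : CochainComplex C ℤ} {φ : K ⟶ L} {N : ℤ} (hK : ∀ p, N < p → IsZero (K.X p))
    (extend : ∀ (n : ℤ) (α : Cochain K L (-1)), IsNullHomotopyFrom φ α (n + 1) →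
      ∃ β : K.X n ⟶ L.X (n - 1), IsNullHomotopyFrom φ (α + Cochain.single β (-1)) n) :
    Nonempty (Homotopy φ 0) := by
  refine ⟨(Cochain.equivHomotopy φ 0).symm ⟨limitNullHomotopy hK extend, ?_⟩⟩
  rw [Cochain.ofHom_zero, add_zero]
  ext p
  let k := (N + 1 - p).toNat
  rw [Cochain.ofHom_v, ← (descendingNullHomotopy hK extend k).2 p (by lia),
    δ_v (-1) 0 (neg_add_cancel 1) _ p p (add_zero p) (p - 1) (p + 1) rfl rfl,
    δ_v (-1) 0 (neg_add_cancel 1) _ p p (add_zero p) (p - 1) (p + 1) rfl rfl,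
    limitNullHomotopy_v hK extend k _ (by lia), limitNullHomotopy_v hK extend k _ (by lia)]

lemma acyclic_mappingCone_of_quasiIso {C : Type*} [Category C] [Abelian C]
    {K L : CochainComplex C ℤ} (g : K ⟶ L) [QuasiIso g] : (mappingCone g).Acyclic := by
  have hg : (HomotopyCategory.subcategoryAcyclic C).trW
      ((HomotopyCategory.quotient _ _).map g) := by
    rw [← HomotopyCategory.quasiIso_eq_trW_subcategoryAcyclic,
      HomotopyCategory.quotient_map_mem_quasiIso_iff, HomologicalComplex.mem_quasiIso_iff]
    infer_instance
  rw [← HomotopyCategory.quotient_obj_mem_subcategoryAcyclic_iff_acyclic]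
  exact ((HomotopyCategory.subcategoryAcyclic C).trW_iff_of_distinguished _
    (HomotopyCategory.mappingCone_triangleh_distinguished g)).1 hg

lemma mappingCone.exists_homotopy_comp_eq_id {C : Type*} [Category C] [Preadditive C]
    [HasZeroObject C] [HasBinaryBiproducts C] {X Y : CochainComplex C ℤ} (f : X ⟶ Y)
    (h : Homotopy (inr f) 0) : ∃ g : Y ⟶ X, Nonempty (Homotopy (g ≫ f) (𝟙 Y)) := by
  have hinr : (HomotopyCategory.quotient C _).map (inr f) = 0 := by
    rw [HomotopyCategory.eq_of_homotopy _ _ h, Functor.map_zero]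
  obtain ⟨γ, hγ⟩ := Pretriangulated.Triangle.coyoneda_exact₂ _
    (HomotopyCategory.mappingCone_triangleh_distinguished f) (𝟙 _)
    (by dsimp [triangleh]; rw [Category.id_comp]; exact hinr)
  obtain ⟨g, rfl⟩ : ∃ g : Y ⟶ X, (HomotopyCategory.quotient C _).map g = γ :=
    (HomotopyCategory.quotient C _).map_surjective γ
  refine ⟨g, ⟨HomotopyCategory.homotopyOfEq _ _ ?_⟩⟩
  rw [Functor.map_comp, CategoryTheory.Functor.map_id]
  exact hγ.symm

end CochainComplex

lemma CAcyclic.exists_comp_d_eq {𝒞 : Set A} {Z : CochainComplex A ℤ} (hZ : CAcyclic 𝒞 Z)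
    {C : A} (hC : C ∈ 𝒞) {m n : ℤ} (hmn : m + 1 = n) (ψ : C ⟶ Z.X n)
    (hψ : ψ ≫ Z.d n (n + 1) = 0) : ∃ β : C ⟶ Z.X m, β ≫ Z.d m n = ψ := by
  have hexact := (HomologicalComplex.exactAt_iff' _ m n (n + 1) (by simp; lia) (by simp)).1
    (hZ C hC n)
  rw [ShortComplex.ab_exact_iff] at hexact
  exact hexact ψ hψ

lemma CAcyclic.exists_isNullHomotopyFrom_add_single {𝒞 : Set A} {K Z : CochainComplex A ℤ}
    (hZ : CAcyclic 𝒞 Z) {φ : K ⟶ Z} {n : ℤ} (hn : K.X n ∈ 𝒞) {α : Cochain K Z (-1)}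
    (hα : IsNullHomotopyFrom φ α (n + 1)) :
    ∃ β : K.X n ⟶ Z.X (n - 1), IsNullHomotopyFrom φ (α + Cochain.single β (-1)) n := by
  have hδ (γ : Cochain K Z (-1)) (p : ℤ) := δ_v (-1) 0 (neg_add_cancel 1) γ p p (add_zero p)
    (p - 1) (p + 1) rfl rfl
  -- the defect of `δ α = φ` in degree `n`; it is a cycle because `δ α = φ` in degree `n + 1`
  set u := φ.f n - α.v n (n - 1) (by lia) ≫ Z.d (n - 1) n -
    K.d n (n + 1) ≫ α.v (n + 1) n (by lia)
  have hu : u ≫ Z.d n (n + 1) = 0 := by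
    have hφ := hα (n + 1) le_rfl
    rw [δ_v (-1) 0 (neg_add_cancel 1) α (n + 1) (n + 1) (add_zero _) n (n + 2) (by lia) (by lia),
      Int.negOnePow_zero, one_smul] at hφ
    simp only [u, Preadditive.sub_comp, Category.assoc, HomologicalComplex.d_comp_d, comp_zero,
      sub_zero]
    rw [φ.comm, ← hφ, Preadditive.comp_add, HomologicalComplex.d_comp_d_assoc, zero_comp,
      add_zero, sub_self]
  obtain ⟨β, hβ⟩ := hZ.exists_comp_d_eq hn (sub_add_cancel n 1) u hu
  refine ⟨β, fun p hp => ?_⟩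
  obtain rfl | hp := hp.eq_or_lt
  · rw [hδ, Cochain.add_v, Cochain.single_v, Cochain.add_single_v_of_ne _ _ _ (by lia),
      Preadditive.add_comp, hβ]
    simp only [u, Int.negOnePow_zero, one_smul]
    abel
  · rw [hδ, Cochain.add_single_v_of_ne _ _ _ hp.ne', Cochain.add_single_v_of_ne _ _ _ (by lia),
      ← hδ]
    exact hα p hp

lemma CAcyclic.nonempty_homotopy_zero {𝒞 : Set A} {K Z : CochainComplex A ℤ} (hZ : CAcyclic 𝒞 Z)
    (hK : ∀ i, K.X i ∈ 𝒞) (hbdd : BoundedAbove K) (φ : K ⟶ Z) : Nonempty (Homotopy φ 0) := by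
  obtain ⟨N, hN⟩ := hbdd
  exact nonempty_homotopy_zero_of_extend hN fun n _ hα =>
    hZ.exists_isNullHomotopyFrom_add_single (hK n) hα

lemma CQuasiIso.cAcyclic_mappingCone {𝒞 : Set A} {X Y : CochainComplex A ℤ} {f : X ⟶ Y}
    (hf : CQuasiIso 𝒞 f) : CAcyclic 𝒞 (mappingCone f) := by
  intro C hC n
  have := hf C hC
  exact (acyclic_mappingCone_of_quasiIso _ n).of_iso
    (mappingCone.mapHomologicalComplexIso f (preadditiveCoyoneda.obj (Opposite.op C))).symm

theorem stmt1 (𝒞 : Set A) (X Cc : CochainComplex A ℤ)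
    (hC : ∀ i, Cc.X i ∈ 𝒞) (hbdd : BoundedAbove Cc)
    (f : X ⟶ Cc) (hf : CQuasiIso 𝒞 f) :
    ∃ g : Cc ⟶ X, Nonempty (Homotopy (g ≫ f) (𝟙 Cc)) :=
  mappingCone.exists_homotopy_comp_eq_id f
    (hf.cAcyclic_mappingCone.nonempty_homotopy_zero hC hbdd (mappingCone.inr f)).some
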